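/- Let (g, [·,·], δ_g) be a Lie bialgebra with [g,g] = g, Z(g) = 0, Der(g) = Inn(g), and (∧²g)^g = 0 (no nonzero g-invariants in g∧g). Then every flag datum of g is equivalent to (0, 0, 0, 0); in particular, for E of codimension one over g, BExtd(E, g) is a singleton: every Lie bialgebra structure on E containing g as a Lie sub-bialgebra is equivalent to the trivial extension. -/
import Mathlib


open TensorProduct LinearMap

noncomputable section

/-- The flip `A ⊗ B → B ⊗ A`. -/
def flipT (k A B : Type*) [Field k] [AddCommGroup A] [Module k A]
    [AddCommGroup B] [Module k B] : A ⊗[k] B →ₗ[k] B ⊗[k] A :=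
  (TensorProduct.comm k A B).toLinearMap

/-- Swap of the first two tensor factors `A ⊗ (B ⊗ C) → B ⊗ (A ⊗ C)`. -/
def swap12 (k A B C : Type*) [Field k] [AddCommGroup A] [Module k A]
    [AddCommGroup B] [Module k B] [AddCommGroup C] [Module k C] :
    A ⊗[k] (B ⊗[k] C) →ₗ[k] B ⊗[k] (A ⊗[k] C) :=
  (TensorProduct.assoc k B A C).toLinearMap ∘ₗ
    rTensor C (flipT k A B) ∘ₗ (TensorProduct.assoc k A B C).symm.toLinearMap

/-- Associator as a linear map. -/
def asr (k A B C : Type*) [Field k] [AddCommGroup A] [Module k A]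
    [AddCommGroup B] [Module k B] [AddCommGroup C] [Module k C] :
    (A ⊗[k] B) ⊗[k] C →ₗ[k] A ⊗[k] (B ⊗[k] C) :=
  (TensorProduct.assoc k A B C).toLinearMap

/-- `δ : M → M ⊗ M` is a Lie coalgebra structure: anti-cocommutativity and co-Jacobi. -/
def IsLieCoalgebra {k M : Type*} [Field k] [AddCommGroup M] [Module k M]
    (δ : M →ₗ[k] M ⊗[k] M) : Prop :=
  (∀ m, flipT k M M (δ m) = - δ m) ∧
  (∀ m, lTensor M δ (δ m) - swap12 k M M M (lTensor M δ (δ m)) =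
      asr k M M M (rTensor M δ (δ m)))

/-- A (bilinear) map `b` is a Lie bracket: alternating and Jacobi (in Leibniz form). -/
def IsLieBracket {k L : Type*} [Field k] [AddCommGroup L] [Module k L]
    (b : L →ₗ[k] L →ₗ[k] L) : Prop :=
  (∀ a, b a a = 0) ∧ (∀ a c d, b a (b c d) = b (b a c) d + b c (b a d))

/-- The adjoint action of `a` on `L ⊗ L`: `a.(Σ b₁⊗b₂) = Σ [a,b₁]⊗b₂ + b₁⊗[a,b₂]`. -/
def adT {k L : Type*} [Field k] [AddCommGroup L] [Module k L]
    (b : L →ₗ[k] L →ₗ[k] L) (a : L) : L ⊗[k] L →ₗ[k] L ⊗[k] L :=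
  rTensor L (b a) + lTensor L (b a)

/-- `(L, b, δ)` is a Lie bialgebra. -/
def IsLieBialgebra {k L : Type*} [Field k] [AddCommGroup L] [Module k L]
    (b : L →ₗ[k] L →ₗ[k] L) (δ : L →ₗ[k] L ⊗[k] L) : Prop :=
  IsLieBracket b ∧ IsLieCoalgebra δ ∧
    ∀ a c, δ (b a c) = adT b a (δ c) - adT b c (δ a)

variable {k g V : Type*} [Field k] [CharZero k]
  [AddCommGroup g] [Module k g] [AddCommGroup V] [Module k V]

/-- The unified co-product map on `E = g ⊕ V`:
`δ_E(a + x) = δ_g(a) + Δ_E(x) − τΔ_E(x) + Δ_V(x) + δ_V(x)`. -/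
def uniCoprod (δg : g →ₗ[k] g ⊗[k] g) (ΔE : V →ₗ[k] g ⊗[k] V)
    (ΔV : V →ₗ[k] g ⊗[k] g) (δV : V →ₗ[k] V ⊗[k] V) :
    (g × V) →ₗ[k] (g × V) ⊗[k] (g × V) :=
  map (inl k g V) (inl k g V) ∘ₗ δg ∘ₗ fst k g V +
    (map (inl k g V) (inr k g V) ∘ₗ ΔE
      - map (inr k g V) (inl k g V) ∘ₗ flipT k g V ∘ₗ ΔE
      + map (inl k g V) (inl k g V) ∘ₗ ΔV
      + map (inr k g V) (inr k g V) ∘ₗ δV) ∘ₗ snd k g V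

/-- Conditions (CLE1)–(CLE5): `(Δ_E, Δ_V, δ_V)` is a Lie coalgebraic extending
structure of `(g, δ_g)` by `V`. -/
def IsCoalgExtStructure (δg : g →ₗ[k] g ⊗[k] g) (ΔE : V →ₗ[k] g ⊗[k] V)
    (ΔV : V →ₗ[k] g ⊗[k] g) (δV : V →ₗ[k] V ⊗[k] V) : Prop :=
  -- (CLE1)
  (∀ x, flipT k g g (ΔV x) = - ΔV x) ∧ (∀ x, flipT k V V (δV x) = - δV x) ∧
  -- (CLE2)
  (∀ x, lTensor g ΔV (ΔE x) + lTensor g δg (ΔV x)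
      - swap12 k g g g (lTensor g ΔV (ΔE x)) - swap12 k g g g (lTensor g δg (ΔV x)) =
      - asr k g g g (rTensor g ΔV (flipT k g V (ΔE x)))
      + asr k g g g (rTensor g δg (ΔV x))) ∧
  -- (CLE3)
  (∀ x, lTensor g ΔE (ΔE x) - swap12 k g g V (lTensor g ΔE (ΔE x)) =
      asr k g g V (rTensor V δg (ΔE x)) + asr k g g V (rTensor V ΔV (δV x))) ∧
  -- (CLE4)
  (∀ x, lTensor g δV (ΔE x) - swap12 k V g V (lTensor V ΔE (δV x)) =
      asr k g V V (rTensor V ΔE (δV x))) ∧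
  -- (CLE5)
  (∀ x, lTensor V δV (δV x) - swap12 k V V V (lTensor V δV (δV x)) =
      asr k V V V (rTensor V δV (δV x)))

end
noncomputable section
variable {k g V : Type*} [Field k] [CharZero k]
  [AddCommGroup g] [Module k g] [AddCommGroup V] [Module k V]

/-- The unified product bracket on `E = g ⊕ V`:
`[a+x, b+y] = [a,b] + x⊳b − y⊳a + f(x,y) + x⊲b − y⊲a + {x,y}`. -/
def uniBracket (gbr : g →ₗ[k] g →ₗ[k] g) (lhd : V →ₗ[k] g →ₗ[k] V)
    (rhd : V →ₗ[k] g →ₗ[k] g) (f : V →ₗ[k] V →ₗ[k] g)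
    (br : V →ₗ[k] V →ₗ[k] V) : (g × V) →ₗ[k] (g × V) →ₗ[k] (g × V) :=
  LinearMap.mk₂ k
    (fun u v => (gbr u.1 v.1 + rhd u.2 v.1 - rhd v.2 u.1 + f u.2 v.2,
                 lhd u.2 v.1 - lhd v.2 u.1 + br u.2 v.2))
    (by intro m₁ m₂ n; simp [Prod.ext_iff]; constructor <;> abel)
    (by intro c m n; simp [Prod.ext_iff, smul_add, smul_sub])
    (by intro m n₁ n₂; simp [Prod.ext_iff]; constructor <;> abel)
    (by intro c m n; simp [Prod.ext_iff, smul_add, smul_sub])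

/-- Conditions (LE1)–(LE7): `(⊲, ⊳, f, {·,·})` is a Lie extending structure
of the Lie algebra `(g, [·,·])` by `V` (Agore–Militaru). -/
def IsLieExtStructure (gbr : g →ₗ[k] g →ₗ[k] g) (lhd : V →ₗ[k] g →ₗ[k] V)
    (rhd : V →ₗ[k] g →ₗ[k] g) (f : V →ₗ[k] V →ₗ[k] g)
    (br : V →ₗ[k] V →ₗ[k] V) : Prop :=
  -- (LE1)
  (∀ x, f x x = 0) ∧ (∀ x, br x x = 0) ∧
  -- (LE2) : (V, ⊲) is a right g-module
  (∀ x a b, lhd x (gbr a b) = lhd (lhd x a) b - lhd (lhd x b) a) ∧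
  -- (LE3)
  (∀ x a b, rhd x (gbr a b) = gbr (rhd x a) b + gbr a (rhd x b)
      + rhd (lhd x a) b - rhd (lhd x b) a) ∧
  -- (LE4)
  (∀ x y a, lhd (br x y) a = br x (lhd y a) + br (lhd x a) y
      + lhd x (rhd y a) - lhd y (rhd x a)) ∧
  -- (LE5)
  (∀ x y a, rhd (br x y) a = rhd x (rhd y a) - rhd y (rhd x a)
      + gbr a (f x y) + f x (lhd y a) + f (lhd x a) y) ∧
  -- (LE6)
  (∀ x y z, f x (br y z) + f y (br z x) + f z (br x y)
      + rhd x (f y z) + rhd y (f z x) + rhd z (f x y) = 0) ∧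
  -- (LE7)
  (∀ x y z, br x (br y z) + br y (br z x) + br z (br x y)
      + lhd x (f y z) + lhd y (f z x) + lhd z (f x y) = 0)

/-- Conditions (BE2)–(BE7): compatibility between the Lie extending structure
and the Lie coalgebraic extending structure. -/
def BEConditions (gbr : g →ₗ[k] g →ₗ[k] g) (δg : g →ₗ[k] g ⊗[k] g)
    (lhd : V →ₗ[k] g →ₗ[k] V) (rhd : V →ₗ[k] g →ₗ[k] g)
    (f : V →ₗ[k] V →ₗ[k] g) (br : V →ₗ[k] V →ₗ[k] V)
    (ΔE : V →ₗ[k] g ⊗[k] V) (ΔV : V →ₗ[k] g ⊗[k] g)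
    (δV : V →ₗ[k] V ⊗[k] V) : Prop :=
  -- (BE2)
  (∀ a x, - ΔV (lhd x a) - δg (rhd x a) =
      flipT k g g (lTensor g (rhd.flip a) (ΔE x)) - lTensor g (rhd.flip a) (ΔE x)
      + adT gbr a (ΔV x)
      - (rTensor g (rhd x) (δg a) + lTensor g (rhd x) (δg a))) ∧
  -- (BE3)
  (∀ a x, ΔE (lhd x a) =
      - rTensor V (gbr a) (ΔE x) + lTensor g (lhd.flip a) (ΔE x)
      + rTensor V (rhd.flip a) (δV x) + lTensor g (lhd x) (δg a)) ∧
  -- (BE4)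
  (∀ a x, δV (lhd x a) =
      lTensor V (lhd.flip a) (δV x) + rTensor V (lhd.flip a) (δV x)) ∧
  -- (BE5)
  (∀ x y, δg (f x y) + ΔV (br x y) =
      (lTensor g (f x) (ΔE y) - flipT k g g (lTensor g (f x) (ΔE y)))
      + (rTensor g (rhd x) (ΔV y) + lTensor g (rhd x) (ΔV y))
      - (lTensor g (f y) (ΔE x) - flipT k g g (lTensor g (f y) (ΔE x)))
      - (rTensor g (rhd y) (ΔV x) + lTensor g (rhd y) (ΔV x))) ∧
  -- (BE6)
  (∀ x y, ΔE (br x y) =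
      (rTensor V (rhd x) (ΔE y) + lTensor g (br x) (ΔE y))
      + lTensor g (lhd x) (ΔV y) + rTensor V (f x) (δV y)
      - (rTensor V (rhd y) (ΔE x) + lTensor g (br y) (ΔE x))
      - lTensor g (lhd y) (ΔV x) - rTensor V (f y) (δV x)) ∧
  -- (BE7)
  (∀ x y, δV (br x y) =
      (rTensor V (lhd x) (ΔE y) - flipT k V V (rTensor V (lhd x) (ΔE y)))
      + (rTensor V (br x) (δV y) + lTensor V (br x) (δV y))
      - (rTensor V (lhd y) (ΔE x) - flipT k V V (rTensor V (lhd y) (ΔE x)))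
      - (rTensor V (br y) (δV x) + lTensor V (br y) (δV x)))

end
noncomputable section
variable {k g : Type*} [Field k] [CharZero k] [AddCommGroup g] [Module k g]

/-- A flag datum `(α, D, A, B)` of the Lie bialgebra `(g, [·,·], δ_g)`. -/
def IsFlagDatum (gbr : g →ₗ[k] g →ₗ[k] g) (δg : g →ₗ[k] g ⊗[k] g)
    (α : g →ₗ[k] k) (D : g →ₗ[k] g) (A : g) (B : g ⊗[k] g) : Prop :=
  -- B ∈ g ∧ g
  flipT k g g B = - B ∧
  -- (1)
  (∀ a b, α (gbr a b) = 0) ∧ δg A = 0 ∧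
  (∀ a, gbr a A = TensorProduct.rid k g (lTensor g α (δg a))) ∧
  -- (2)
  (∀ a b, D (gbr a b) = gbr (D a) b + gbr a (D b) + α a • D b - α b • D a) ∧
  -- (3)
  (A ⊗ₜ[k] B - swap12 k g g g (A ⊗ₜ[k] B) + asr k g g g (B ⊗ₜ[k] A)
      + lTensor g δg B - swap12 k g g g (lTensor g δg B)
      - asr k g g g (rTensor g δg B) = 0) ∧
  -- (4)
  (∀ a, D a ⊗ₜ[k] A - A ⊗ₜ[k] D a + α a • B + adT gbr a B + δg (D a)
      - rTensor g D (δg a) - lTensor g D (δg a) = 0)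

/-- Equivalence of flag datums: `α = α'`, `A = A'`, and there are `U ∈ g`,
`β ∈ k*` with `D(a) = [U,a] + βD'(a) − α(a)U` and
`B = δ_g(U) + βB' + U⊗A − A⊗U`. -/
def FlagEquiv (gbr : g →ₗ[k] g →ₗ[k] g) (δg : g →ₗ[k] g ⊗[k] g)
    (α : g →ₗ[k] k) (D : g →ₗ[k] g) (A : g) (B : g ⊗[k] g)
    (α' : g →ₗ[k] k) (D' : g →ₗ[k] g) (A' : g) (B' : g ⊗[k] g) : Prop :=
  α = α' ∧ A = A' ∧ ∃ (U : g) (β : k), β ≠ 0 ∧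
    (∀ a, D a = gbr U a + β • D' a - α a • U) ∧
    B = δg U + β • B' + U ⊗ₜ[k] A - A ⊗ₜ[k] U

end
noncomputable section
variable {k g : Type*} [Field k] [CharZero k] [AddCommGroup g] [Module k g]


section MyHelpers

variable {k : Type*} [Field k] {A B C : Type*}
  [AddCommGroup A] [Module k A] [AddCommGroup B] [Module k B]
  [AddCommGroup C] [Module k C]

private lemma my_flipT_map (f : A →ₗ[k] B) (h : A →ₗ[k] C) (x : A ⊗[k] A) :
    flipT k B C (map f h x) = map h f (flipT k A A x) := by
  induction x using TensorProduct.induction_on with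
  | zero => simp
  | tmul a b => simp [flipT]
  | add x y hx hy => simp [hx, hy]

private lemma my_bilin_antisymm (b : A →ₗ[k] A →ₗ[k] B) (hb : ∀ x, b x x = 0)
    (x y : A) : b x y = - b y x := by
  have h := hb (x + y)
  simp only [map_add, LinearMap.add_apply, hb, zero_add, add_zero] at h
  exact eq_neg_of_add_eq_zero_left (by rw [add_comm] at h; exact h)

private lemma my_rid_nat (f : A →ₗ[k] B) (x : A ⊗[k] k) :
    TensorProduct.rid k B (map f LinearMap.id x) = f (TensorProduct.rid k A x) := by
  induction x using TensorProduct.induction_on with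
  | zero => simp
  | tmul a t => simp
  | add x y hx hy => simp [hx, hy]

private lemma my_lid_nat (f : A →ₗ[k] B) (x : k ⊗[k] A) :
    TensorProduct.lid k B (map LinearMap.id f x) = f (TensorProduct.lid k A x) := by
  induction x using TensorProduct.induction_on with
  | zero => simp
  | tmul t a => simp
  | add x y hx hy => simp [hx, hy]

private lemma my_flip_kk (x : k ⊗[k] k) : flipT k k k x = x := by
  have key : ∀ s t : k, (s ⊗ₜ[k] t : k ⊗[k] k) = (s * t) • ((1:k) ⊗ₜ[k] (1:k)) := by
    intro s t
    calc s ⊗ₜ[k] t = (s • (1:k)) ⊗ₜ[k] (t • (1:k)) := by simp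
    _ = (s*t) • ((1:k) ⊗ₜ[k] (1:k)) := by
        rw [TensorProduct.smul_tmul', TensorProduct.tmul_smul,
          TensorProduct.smul_tmul', smul_smul, mul_comm]
  induction x using TensorProduct.induction_on with
  | zero => simp
  | tmul s t => simp [flipT, key s t, key t s, mul_comm]
  | add x y hx hy => simp [hx, hy]

private lemma my_zero_on_brackets {g : Type*} [AddCommGroup g] [Module k g]
    (gbr : g →ₗ[k] g →ₗ[k] g)
    (hperfect : Submodule.span k {c : g | ∃ a b, gbr a b = c} = ⊤)
    (f : g →ₗ[k] A) (h : ∀ a b, f (gbr a b) = 0) : f = 0 := by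
  rw [← LinearMap.ker_eq_top, eq_top_iff, ← hperfect, Submodule.span_le]
  rintro c ⟨a, b, rfl⟩
  simp [LinearMap.mem_ker, h]


private lemma my_rid_nat' (f : A →ₗ[k] B) (x : A ⊗[k] k) :
    TensorProduct.rid k B (rTensor k f x) = f (TensorProduct.rid k A x) := by
  induction x using TensorProduct.induction_on with
  | zero => simp
  | tmul a t => simp
  | add x y hx hy => simp [hx, hy]

private lemma my_lid_nat' (f : A →ₗ[k] B) (x : k ⊗[k] A) :
    TensorProduct.lid k B (lTensor k f x) = f (TensorProduct.lid k A x) := by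
  induction x using TensorProduct.induction_on with
  | zero => simp
  | tmul t a => simp
  | add x y hx hy => simp [hx, hy]

private lemma my_push (f : A →ₗ[k] A) (p : A →ₗ[k] B) (q : A →ₗ[k] C)
    (f' : B →ₗ[k] B) (f'' : C →ₗ[k] C)
    (hpf : ∀ x, p (f x) = f' (p x)) (hqf : ∀ x, q (f x) = f'' (q x))
    (Z : A ⊗[k] A) :
    map p q ((rTensor A f + lTensor A f) Z)
      = (rTensor C f' + lTensor B f'') (map p q Z) := by
  induction Z using TensorProduct.induction_on with
  | zero => simp
  | tmul x y => simp [hpf, hqf]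
  | add x y hx hy =>
      simp only [map_add, LinearMap.add_apply, map_add] at hx hy ⊢
      rw [hx, hy]

private lemma my_prod_decomp {g : Type*} [AddCommGroup g] [Module k g]
    (Y : (g × k) ⊗[k] (g × k)) :
    Y = map (inl k g k) (inl k g k) (map (fst k g k) (fst k g k) Y)
      + map (inl k g k) (inr k g k) (map (fst k g k) (snd k g k) Y)
      + map (inr k g k) (inl k g k) (map (snd k g k) (fst k g k) Y)
      + map (inr k g k) (inr k g k) (map (snd k g k) (snd k g k) Y) := by
  have husum : ∀ w : g × k, inl k g k w.1 + inr k g k w.2 = w := by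
    intro w; ext <;> simp
  induction Y using TensorProduct.induction_on with
  | zero => simp
  | tmul u v =>
      conv_lhs => rw [← husum u, ← husum v]
      simp only [TensorProduct.add_tmul, TensorProduct.tmul_add, map_tmul,
        fst_apply, snd_apply, inl_apply, inr_apply]
      abel
  | add x y hx hy =>
      simp only [map_add]
      conv_lhs => rw [hx, hy]
      abel

end MyHelpers

set_option maxHeartbeats 2000000

/-- **Corollary.** If `[g,g] = g`, `Z(g) = 0`, every derivation of `g` is inner
and `(∧²g)^g = 0`, then every flag datum is equivalent to `(0,0,0,0)`; in
particular every Lie bialgebra structure on a space `E` of codimension one over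
`g` containing `g` as a Lie sub-bialgebra is equivalent (via an isomorphism
restricting to the identity on `g`) to the trivial extension. -/
theorem bextd_trivial (gbr : g →ₗ[k] g →ₗ[k] g) (δg : g →ₗ[k] g ⊗[k] g)
    (hg : IsLieBialgebra gbr δg)
    (hperfect : Submodule.span k {c : g | ∃ a b, gbr a b = c} = ⊤)
    (hcenter : ∀ c : g, (∀ a, gbr a c = 0) → c = 0)
    (hinner : ∀ D : g →ₗ[k] g,
      (∀ a b, D (gbr a b) = gbr (D a) b + gbr a (D b)) → ∃ U, ∀ a, D a = gbr U a)
    (hinv : ∀ B : g ⊗[k] g, (∀ a, adT gbr a B = 0) → B = 0) :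
    (∀ (α : g →ₗ[k] k) (D : g →ₗ[k] g) (A : g) (B : g ⊗[k] g),
      IsFlagDatum gbr δg α D A B → FlagEquiv gbr δg α D A B 0 0 0 0) ∧
    (∀ (brE : (g × k) →ₗ[k] (g × k) →ₗ[k] (g × k))
        (δE : (g × k) →ₗ[k] (g × k) ⊗[k] (g × k)),
      IsLieBialgebra brE δE →
      (∀ a b : g, brE (inl k g k a) (inl k g k b) = inl k g k (gbr a b)) →
      (∀ a : g, δE (inl k g k a) = map (inl k g k) (inl k g k) (δg a)) →
      ∃ φ : (g × k) ≃ₗ[k] (g × k),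
        (∀ a : g, φ (inl k g k a) = inl k g k a) ∧
        (∀ u v, φ (brE u v) = uniBracket gbr 0 0 0 0 (φ u) (φ v)) ∧
        (∀ u, map (φ : (g × k) →ₗ[k] (g × k)) (φ : (g × k) →ₗ[k] (g × k)) (δE u)
            = uniCoprod δg 0 0 0 (φ u))) := by
  constructor
  · rintro α D A B ⟨hB, hα1, hA1, hA2, hD2, h3, h4⟩
    have hα : α = 0 := my_zero_on_brackets gbr hperfect α hα1
    have hA : A = 0 := by
      apply hcenter
      intro a
      rw [hA2 a, hα]
      simp
    obtain ⟨U, hU⟩ := hinner D (by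
      intro a b
      have h := hD2 a b
      rw [hα] at h
      simpa using h)
    have hDU : D = gbr U := LinearMap.ext hU
    have hBU : B = δg U := by
      rw [← sub_eq_zero]
      apply hinv
      intro a
      have h4a := h4 a
      rw [hα, hA, hDU, hg.2.2 U a] at h4a
      simp only [LinearMap.zero_apply, zero_smul, TensorProduct.tmul_zero,
        TensorProduct.zero_tmul, add_zero, zero_add, sub_zero, zero_sub, neg_zero,
        adT, LinearMap.add_apply, map_sub] at h4a ⊢
      abel_nf at h4a ⊢
      exact h4a
    refine ⟨hα, hA, U, 1, one_ne_zero, fun a => ?_, ?_⟩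
    · simp [hU a, hα]
    · simp [hBU, hA]
  · intro brE δE hE hbr hδ
    set e : g × k := (0, 1) with he
    have hanti : ∀ u v, brE u v = - brE v u := my_bilin_antisymm brE hE.1.1
    have hganti : ∀ x y : g, gbr x y = - gbr y x := my_bilin_antisymm gbr hg.1.1
    have hdec : ∀ u : g × k, u = inl k g k u.1 + u.2 • e := by
      intro u; ext <;> simp [he]
    have expand1 : ∀ (u : g × k) (c : g),
        brE u (inl k g k c) = inl k g k (gbr u.1 c) + u.2 • brE e (inl k g k c) := by
      intro u c
      conv_lhs => rw [hdec u]
      simp only [map_add, map_smul, LinearMap.add_apply, LinearMap.smul_apply, hbr]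
    have expand2 : ∀ (c : g) (u : g × k),
        brE (inl k g k c) u = inl k g k (gbr c u.1) - u.2 • brE e (inl k g k c) := by
      intro c u
      conv_lhs => rw [hdec u]
      rw [map_add, map_smul, hbr, hanti (inl k g k c) e]
      simp [sub_eq_add_neg]
    -- the second component of brE e (inl ·) vanishes
    have hα0 : ∀ a : g, (brE e (inl k g k a)).2 = 0 := by
      have hz : (snd k g k ∘ₗ (brE e) ∘ₗ inl k g k) = 0 := by
        apply my_zero_on_brackets gbr hperfect
        intro a b
        have hjac := hE.1.2 e (inl k g k a) (inl k g k b)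
        rw [hbr a b, expand1 (brE e (inl k g k a)) b,
          expand2 a (brE e (inl k g k b))] at hjac
        have h2 := congrArg Prod.snd hjac
        simp only [Prod.snd_add, Prod.snd_sub, Prod.smul_snd, smul_eq_mul] at h2
        simp only [LinearMap.comp_apply, LinearMap.snd_apply]
        rw [h2]
        simp [mul_comm]
      intro a
      simpa using LinearMap.congr_fun hz a
    -- the first component is a derivation, hence inner
    have hd : ∀ a b : g, (brE e (inl k g k (gbr a b))).1
        = gbr ((brE e (inl k g k a)).1) b + gbr a ((brE e (inl k g k b)).1) := by
      intro a b
      have hjac := hE.1.2 e (inl k g k a) (inl k g k b)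
      rw [hbr a b, expand1 (brE e (inl k g k a)) b,
        expand2 a (brE e (inl k g k b))] at hjac
      have h1 := congrArg Prod.fst hjac
      simp only [Prod.fst_add, Prod.fst_sub, Prod.smul_fst] at h1
      rw [hα0 a, hα0 b] at h1
      simpa using h1
    obtain ⟨U, hU⟩ := hinner (fst k g k ∘ₗ (brE e) ∘ₗ inl k g k) (by
      intro a b; simpa using hd a b)
    have hbe : ∀ a : g, brE e (inl k g k a) = inl k g k (gbr U a) := by
      intro a
      have h1 : (brE e (inl k g k a)).1 = gbr U a := by simpa using hU a
      rw [Prod.ext_iff]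
      refine ⟨by simpa using h1, by simpa using hα0 a⟩
    have hee : brE e e = 0 := hE.1.1 e
    have hbe' : ∀ a : g, brE (inl k g k a) e = - inl k g k (gbr U a) := by
      intro a; rw [hanti, hbe]
    -- the isomorphism φ
    set φL : (g × k) →ₗ[k] (g × k) :=
      LinearMap.prod (fst k g k + LinearMap.toSpanSingleton k g U ∘ₗ snd k g k)
        (snd k g k) with hφL
    set ψL : (g × k) →ₗ[k] (g × k) :=
      LinearMap.prod (fst k g k - LinearMap.toSpanSingleton k g U ∘ₗ snd k g k)
        (snd k g k) with hψL
    have hφψ : φL ∘ₗ ψL = LinearMap.id := by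
      apply LinearMap.ext; intro u
      simp [hφL, hψL, LinearMap.toSpanSingleton_apply, sub_add_cancel]
    have hψφ : ψL ∘ₗ φL = LinearMap.id := by
      apply LinearMap.ext; intro u
      simp [hφL, hψL, LinearMap.toSpanSingleton_apply, add_sub_cancel_right]
    set φ := LinearEquiv.ofLinear φL ψL hφψ hψφ with hφdef
    have hφapp : ∀ u : g × k, φ u = (u.1 + u.2 • U, u.2) := by
      intro u
      simp [hφdef, hφL, LinearEquiv.ofLinear_apply, LinearMap.prod_apply,
        LinearMap.toSpanSingleton_apply]
    have hφinl : ∀ a : g, φ (inl k g k a) = inl k g k a := by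
      intro a; rw [hφapp]; ext <;> simp
    refine ⟨φ, hφinl, ?_, ?_⟩
    · -- bracket identity
      intro u v
      conv_lhs => rw [hdec u, hdec v]
      simp only [map_add, map_smul, LinearMap.add_apply, LinearMap.smul_apply,
        hbr, hbe, hbe', hee, smul_zero, add_zero]
      simp only [map_add, map_smul, map_neg, hφinl]
      rw [hφapp u, hφapp v]
      simp only [uniBracket, LinearMap.mk₂_apply, LinearMap.zero_apply,
        LinearMap.inl_apply]
      rw [Prod.ext_iff]
      constructor
      · simp only [Prod.fst_add, Prod.smul_fst, Prod.fst_neg, LinearMap.inl_apply]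
        simp only [map_add, map_smul, LinearMap.add_apply, LinearMap.smul_apply,
          hg.1.1, smul_zero, add_zero]
        rw [hganti u.1 U]
        abel
      · simp
    · -- coproduct identity
      intro u
      have hφinlL : (↑φ : (g × k) →ₗ[k] (g × k)) ∘ₗ inl k g k = inl k g k :=
        LinearMap.ext hφinl
      have hmapinl : ∀ Z : g ⊗[k] g,
          map (↑φ : (g × k) →ₗ[k] (g × k)) (↑φ) (map (inl k g k) (inl k g k) Z)
            = map (inl k g k) (inl k g k) Z := by
        intro Z
        rw [← LinearMap.comp_apply, ← TensorProduct.map_comp, hφinlL]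
      have key_e : map (↑φ : (g × k) →ₗ[k] (g × k)) (↑φ) (δE e)
          = map (inl k g k) (inl k g k) (δg U) := by
        set Y := map (↑φ : (g × k) →ₗ[k] (g × k)) (↑φ) (δE e)
          - map (inl k g k) (inl k g k) (δg U) with hYdef
        -- invariance of Y
        have hYinv : ∀ a : g,
            (rTensor (g × k) (inl k g k ∘ₗ gbr a ∘ₗ fst k g k)
              + lTensor (g × k) (inl k g k ∘ₗ gbr a ∘ₗ fst k g k)) Y = 0 := by
          intro a
          set La : (g × k) →ₗ[k] (g × k) := inl k g k ∘ₗ gbr a ∘ₗ fst k g k with hLa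
          have hMφ : ∀ x : g × k, φ (brE (inl k g k a) x) = La (φ x) := by
            intro x
            conv_lhs => rw [hdec x]
            rw [map_add, map_smul, hbr, hbe' a, map_add, map_smul, hφinl, map_neg,
              hφinl]
            rw [hLa]
            simp only [LinearMap.comp_apply, LinearMap.fst_apply, hφapp]
            rw [map_add, map_smul, hganti U a]
            simp [sub_eq_add_neg, smul_neg]
          have hAd1 : ∀ X : (g × k) ⊗[k] (g × k),
              map (↑φ : (g × k) →ₗ[k] (g × k)) (↑φ) (adT brE (inl k g k a) X)
                = (rTensor (g × k) La + lTensor (g × k) La)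
                    (map (↑φ : (g × k) →ₗ[k] (g × k)) (↑φ) X) := by
            intro X
            induction X using TensorProduct.induction_on with
            | zero => simp
            | tmul x y =>
                simp only [adT, LinearMap.add_apply, rTensor_tmul, lTensor_tmul,
                  map_add, map_tmul, LinearEquiv.coe_coe]
                rw [hMφ x, hMφ y]
            | add x y hx hy => simp only [map_add, hx, hy]
          have hAd2 : ∀ Z : g ⊗[k] g,
              adT brE e (map (inl k g k) (inl k g k) Z)
                = map (inl k g k) (inl k g k) (adT gbr U Z) := by
            intro Z
            induction Z using TensorProduct.induction_on with
            | zero => simp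
            | tmul x y =>
                simp only [adT, LinearMap.add_apply, rTensor_tmul, lTensor_tmul,
                  map_add, map_tmul]
                rw [hbe x, hbe y]
            | add x y hx hy => simp only [map_add, hx, hy]
          have hAd3 : ∀ Z : g ⊗[k] g,
              (rTensor (g × k) La + lTensor (g × k) La)
                  (map (inl k g k) (inl k g k) Z)
                = map (inl k g k) (inl k g k) (adT gbr a Z) := by
            intro Z
            induction Z using TensorProduct.induction_on with
            | zero => simp
            | tmul x y => simp [adT, hLa]
            | add x y hx hy => simp only [map_add, LinearMap.add_apply] at hx hy ⊢
                               rw [hx, hy]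
          have hcomp := hE.2.2 (inl k g k a) e
          rw [hbe' a, map_neg, hδ (gbr U a), hδ a] at hcomp
          have h1 := congrArg
            (⇑(map (↑φ : (g × k) →ₗ[k] (g × k)) (↑φ : (g × k) →ₗ[k] (g × k)))) hcomp
          rw [map_neg, map_sub, hmapinl, hAd1, hAd2, hmapinl] at h1
          rw [hg.2.2 U a, map_sub] at h1
          rw [hYdef, map_sub, hAd3, sub_eq_zero]
          rw [neg_sub] at h1
          exact ((sub_left_inj).mp h1.symm)
        have hflipY : flipT k (g × k) (g × k) Y = - Y := by
          rw [hYdef, map_sub,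
            my_flipT_map ((↑φ : (g × k) →ₗ[k] (g × k))) ((↑φ : (g × k) →ₗ[k] (g × k))) (δE e),
            my_flipT_map (inl k g k) (inl k g k) (δg U), hE.2.1.1 e, hg.2.1.1 U]
          simp only [map_neg]
          abel
        have hPP : map (fst k g k) (fst k g k) Y = 0 := by
          apply hinv
          intro a
          have h := congrArg (map (fst k g k) (fst k g k)) (hYinv a)
          rw [my_push _ _ _ (gbr a) (gbr a) (by intro x; simp) (by intro x; simp)] at h
          simpa [adT] using h
        have hPQ : map (fst k g k) (snd k g k) Y = 0 := by
          have hA0 : TensorProduct.rid k g (map (fst k g k) (snd k g k) Y) = 0 := by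
            apply hcenter
            intro a
            have h := congrArg (map (fst k g k) (snd k g k)) (hYinv a)
            rw [my_push _ _ _ (gbr a) (0 : k →ₗ[k] k) (by intro x; simp)
              (by intro x; simp)] at h
            simp only [lTensor_zero, LinearMap.add_apply, LinearMap.zero_apply,
              add_zero, map_zero] at h
            rw [← my_rid_nat' (gbr a), h, map_zero]
          have := congrArg (TensorProduct.rid k g).symm hA0
          simpa using this
        have hQP : map (snd k g k) (fst k g k) Y = 0 := by
          have hA0 : TensorProduct.lid k g (map (snd k g k) (fst k g k) Y) = 0 := by
            apply hcenter
            intro a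
            have h := congrArg (map (snd k g k) (fst k g k)) (hYinv a)
            rw [my_push _ _ _ (0 : k →ₗ[k] k) (gbr a) (by intro x; simp)
              (by intro x; simp)] at h
            simp only [rTensor_zero, LinearMap.add_apply, LinearMap.zero_apply,
              zero_add, map_zero] at h
            rw [← my_lid_nat' (gbr a), h, map_zero]
          have := congrArg (TensorProduct.lid k g).symm hA0
          simpa using this
        have hQQ : map (snd k g k) (snd k g k) Y = 0 := by
          have h : map (snd k g k) (snd k g k) Y
              = - map (snd k g k) (snd k g k) Y := by
            conv_lhs => rw [← my_flip_kk (map (snd k g k) (snd k g k) Y),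
              my_flipT_map, hflipY, map_neg]
          have h2 : (2 : k) • map (snd k g k) (snd k g k) Y = 0 := by
            rw [two_smul]
            exact add_eq_zero_iff_eq_neg.mpr h
          rcases smul_eq_zero.mp h2 with h3 | h3
          · exact absurd h3 two_ne_zero
          · exact h3
        have hY0 : Y = 0 := by
          rw [my_prod_decomp Y, hPP, hPQ, hQP, hQQ]
          simp
        rw [hYdef, sub_eq_zero] at hY0
        exact hY0
      conv_lhs => rw [hdec u]
      rw [map_add, map_smul, map_add, map_smul, hδ, hmapinl, key_e, hφapp]
      simp only [uniCoprod, LinearMap.add_apply, LinearMap.comp_apply,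
        LinearMap.fst_apply, LinearMap.snd_apply, LinearMap.comp_zero,
        LinearMap.zero_comp, map_zero, LinearMap.zero_apply, add_zero,
        LinearMap.map_zero, sub_zero, zero_add]
      rw [map_add, map_smul, map_add]
      simp

end
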